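/- (Lemma 5) Let ω = u + iv be in the upper half-plane with k = |ω|, and let γ = (a b; c d) ∈ SL₂(ℤ) and γ′ = (e a; f c) ∈ SL₂(ℤ) with a/c < e/f and c, d, f > 0. Then there exists K ∈ ℕ, K ≥ 1, such that γ·(K 1; −1 0) = γ′. Moreover, if u ≥ 0, k ≤ 1, and max{Y_γ, Y_{γ′}} ≤ Q², then Φ(γ′) − Φ(γ) ≥ K k⁴ / Q². -/

import Mathlib

open Complex Matrix MatrixGroups UpperHalfPlane Real

noncomputable section

/-- real entry `γ i j` of an integer matrix. -/
def ent (γ : SL(2,ℤ)) (i j : Fin 2) : ℝ := ((γ i j : ℤ) : ℝ)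

/-- `X_γ = |aω+b|²`. -/
def Xg (ω : ℂ) (γ : SL(2,ℤ)) : ℝ := (‖ent γ 0 0 * ω + (ent γ 0 1 : ℂ)‖) ^ 2

/-- `Y_γ = |cω+d|²`. -/
def Yg (ω : ℂ) (γ : SL(2,ℤ)) : ℝ := (‖ent γ 1 0 * ω + (ent γ 1 1 : ℂ)‖) ^ 2

/-- `Z_γ = ac|ω|² + bd + u(ad+bc)`. -/
def Zg (ω : ℂ) (γ : SL(2,ℤ)) : ℝ :=
  ent γ 0 0 * ent γ 1 0 * (‖ω‖) ^ 2 + ent γ 0 1 * ent γ 1 1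
    + ω.re * (ent γ 0 0 * ent γ 1 1 + ent γ 0 1 * ent γ 1 0)

/-- `T_γ = ‖γ‖² = X_γ + k²Y_γ − 2uZ_γ`. -/
def Tg (ω : ℂ) (γ : SL(2,ℤ)) : ℝ :=
  Xg ω γ + (‖ω‖) ^ 2 * Yg ω γ - 2 * ω.re * Zg ω γ

/-- `Φ(γ) = Re(γω)`. -/
def Phi (ω : ℍ) (γ : SL(2,ℤ)) : ℝ := ((γ • ω : ℍ) : ℂ).re

/-- `ε_T = (T_γ − √(T_γ² − Δ²))/Δ` with `Δ = 2v²`. -/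
def epsT (ω : ℂ) (γ : SL(2,ℤ)) : ℝ :=
  (Tg ω γ - Real.sqrt ((Tg ω γ) ^ 2 - (2 * ω.im ^ 2) ^ 2)) / (2 * ω.im ^ 2)

/-- `Ψ(γ) = (Z_γ − u ε_T)/(Y_γ − ε_T)`, the x-intercept of the geodesic `ω → γω`. -/
def Psi (ω : ℍ) (γ : SL(2,ℤ)) : ℝ :=
  (Zg ω γ - (ω : ℂ).re * epsT ω γ) / (Yg ω γ - epsT ω γ)

/-- the matrix `(K 1; −1 0) ∈ SL₂(ℤ)`. -/
def genK (K : ℤ) : SL(2,ℤ) := ⟨!![K, 1; -1, 0], by simp [Matrix.det_fin_two_of]⟩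

set_option maxHeartbeats 1600000 in
/-- Lemma 5: if `γ = (a b; c d)` and `γ′ = (e a; f c)` are in `SL₂(ℤ)` with
`a/c < e/f` and `c, d, f > 0`, then `γ·(K 1; −1 0) = γ′` for some `K ≥ 1`; moreover if
`u ≥ 0`, `k ≤ 1` and `max{Y_γ, Y_{γ′}} ≤ Q²`, then `Φ(γ′) − Φ(γ) ≥ K k⁴/Q²`. -/
theorem exists_genK_mul_eq (ω : ℍ) (γ γ' : SL(2,ℤ))
    (h01 : γ' 0 1 = γ 0 0) (h11 : γ' 1 1 = γ 1 0)
    (hc : 0 < γ 1 0) (hd : 0 < γ 1 1) (hf : 0 < γ' 1 0)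
    (hlt : ent γ 0 0 / ent γ 1 0 < ent γ' 0 0 / ent γ' 1 0) :
    ∃ K : ℕ, 1 ≤ K ∧ γ * genK (K : ℤ) = γ' ∧
      (0 ≤ (ω : ℂ).re → ‖(ω : ℂ)‖ ≤ 1 →
        ∀ Q : ℝ, max (Yg ω γ) (Yg ω γ') ≤ Q ^ 2 →
          Phi ω γ' - Phi ω γ ≥ (K : ℝ) * (‖(ω : ℂ)‖) ^ 4 / Q ^ 2) := by
  have hdet1 : γ 0 0 * γ 1 1 - γ 0 1 * γ 1 0 = 1 := by
    have h := γ.prop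
    rw [Matrix.det_fin_two] at h
    exact h
  have hdet2 : γ' 0 0 * γ 1 0 - γ 0 0 * γ' 1 0 = 1 := by
    have h := γ'.prop
    rw [Matrix.det_fin_two] at h
    rw [h01, h11] at h
    exact h
  have hadf : γ 1 0 ∣ (γ 0 0 * (γ 1 1 + γ' 1 0)) := by
    have : γ 0 0 * (γ 1 1 + γ' 1 0) = γ 1 0 * (γ 0 1 + γ' 0 0) := by linear_combination hdet1 - hdet2
    rw [this]; exact dvd_mul_right _ _
  have hco : IsCoprime (γ 1 0) (γ 0 0) := ⟨-(γ 0 1), γ 1 1, by linear_combination hdet1⟩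
  have hdvd : γ 1 0 ∣ (γ 1 1 + γ' 1 0) := hco.dvd_of_dvd_mul_left hadf
  obtain ⟨K0, hK0⟩ := hdvd
  have hK0pos : 0 < K0 := by
    rcases le_or_gt K0 0 with h | h
    · have : γ 1 0 * K0 ≤ 0 := mul_nonpos_of_nonneg_of_nonpos hc.le h
      linarith [hK0 ▸ this]
    · exact h
  have haK2 : γ 0 0 * K0 = γ 0 1 + γ' 0 0 := by
    have hcne : γ 1 0 ≠ 0 := hc.ne'
    apply mul_left_cancel₀ hcne
    have : γ 0 0 * (γ 1 1 + γ' 1 0) = γ 1 0 * (γ 0 1 + γ' 0 0) := by linear_combination hdet1 - hdet2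
    linear_combination this - γ 0 0 * hK0
  have hmul : γ * genK K0 = γ' := by
    ext i j
    rw [Matrix.SpecialLinearGroup.coe_mul]
    fin_cases i <;> fin_cases j <;>
      simp [genK, Matrix.mul_apply, Fin.sum_univ_two]
    · linear_combination haK2
    · exact h01.symm
    · linear_combination -hK0
    · exact h11.symm
  refine ⟨K0.toNat, by omega, ?_, ?_⟩
  · have h : (K0.toNat : ℤ) = K0 := Int.toNat_of_nonneg hK0pos.le
    rw [h]; exact hmul
  intro hu hk Q hQ
  -- real casts of entries
  have hdet1R : ent γ 0 0 * ent γ 1 1 - ent γ 0 1 * ent γ 1 0 = 1 := by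
    simp only [ent]; exact_mod_cast hdet1
  have hFdR : ent γ' 1 0 = ent γ 1 0 * (K0 : ℝ) - ent γ 1 1 := by
    have h : γ' 1 0 = γ 1 0 * K0 - γ 1 1 := by linear_combination hK0
    simp only [ent]; exact_mod_cast h
  have hEeR : ent γ' 0 0 = ent γ 0 0 * (K0 : ℝ) - ent γ 0 1 := by
    have h : γ' 0 0 = γ 0 0 * K0 - γ 0 1 := by linear_combination -haK2
    simp only [ent]; exact_mod_cast h
  have hC1 : (1:ℝ) ≤ ent γ 1 0 := by simp only [ent]; exact_mod_cast hc
  have hD1 : (1:ℝ) ≤ ent γ 1 1 := by simp only [ent]; exact_mod_cast hd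
  have hF1 : (1:ℝ) ≤ ent γ' 1 0 := by simp only [ent]; exact_mod_cast hf
  have hK1 : (1:ℝ) ≤ (K0 : ℝ) := by exact_mod_cast hK0pos
  -- analytic lemmas
  have hY1 : Yg ω γ = (ent γ 1 0 * (ω:ℂ).re + ent γ 1 1)^2 + (ent γ 1 0)^2 * (ω:ℂ).im^2 := by
    rw [Yg, Complex.sq_norm, Complex.normSq_apply]
    simp [ent]
    try ring
  have hY2 : Yg ω γ' = (ent γ' 1 0 * (ω:ℂ).re + ent γ 1 0)^2 + (ent γ' 1 0)^2 * (ω:ℂ).im^2 := by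
    rw [Yg, Complex.sq_norm, Complex.normSq_apply]
    simp [ent, h11]
    try ring
  have hPhi1 : Phi ω γ = ((ent γ 0 0 * (ω:ℂ).re + ent γ 0 1)*(ent γ 1 0 * (ω:ℂ).re + ent γ 1 1)
      + (ent γ 0 0 * (ω:ℂ).im)*(ent γ 1 0 * (ω:ℂ).im))
      / ((ent γ 1 0 * (ω:ℂ).re + ent γ 1 1)^2 + (ent γ 1 0)^2 * (ω:ℂ).im^2) := by
    rw [Phi, UpperHalfPlane.specialLinearGroup_apply]
    simp only [UpperHalfPlane.coe_mk]
    rw [Complex.div_re]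
    have h1 : Complex.normSq ((algebraMap ℤ ℝ (γ 1 0) : ℂ) * ω + (algebraMap ℤ ℝ (γ 1 1) : ℂ))
        = (ent γ 1 0 * (ω:ℂ).re + ent γ 1 1)^2 + (ent γ 1 0)^2 * (ω:ℂ).im^2 := by
      rw [Complex.normSq_apply]
      simp [ent]
      try ring
    rw [h1, ← add_div]
    congr 1
    simp [ent]
    try ring
  have hPhi2 : Phi ω γ' = ((ent γ' 0 0 * (ω:ℂ).re + ent γ 0 0)*(ent γ' 1 0 * (ω:ℂ).re + ent γ 1 0)
      + (ent γ' 0 0 * (ω:ℂ).im)*(ent γ' 1 0 * (ω:ℂ).im))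
      / ((ent γ' 1 0 * (ω:ℂ).re + ent γ 1 0)^2 + (ent γ' 1 0)^2 * (ω:ℂ).im^2) := by
    rw [Phi, UpperHalfPlane.specialLinearGroup_apply]
    simp only [UpperHalfPlane.coe_mk]
    rw [Complex.div_re]
    have h1 : Complex.normSq ((algebraMap ℤ ℝ (γ' 1 0) : ℂ) * ω + (algebraMap ℤ ℝ (γ' 1 1) : ℂ))
        = (ent γ' 1 0 * (ω:ℂ).re + ent γ 1 0)^2 + (ent γ' 1 0)^2 * (ω:ℂ).im^2 := by
      rw [Complex.normSq_apply]
      simp [ent, h11]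
      try ring
    rw [h1, ← add_div]
    congr 1
    simp [ent, h01, h11]
    try ring
  have habs2 : (‖(ω:ℂ)‖)^2 = (ω:ℂ).re^2 + (ω:ℂ).im^2 := by
    rw [Complex.sq_norm, Complex.normSq_apply]; ring
  have habs4 : (‖(ω:ℂ)‖)^4 = ((ω:ℂ).re^2 + (ω:ℂ).im^2)^2 := by
    rw [← habs2]; ring
  have hKn : ((K0.toNat : ℕ) : ℝ) = (K0 : ℝ) := by
    exact_mod_cast Int.toNat_of_nonneg hK0pos.le
  -- abbreviations
  set u := (ω:ℂ).re with hu_def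
  set v := (ω:ℂ).im with hv_def
  set A := ent γ 0 0 with hA_def
  set B := ent γ 0 1 with hB_def
  set C := ent γ 1 0 with hC_def
  set Dd := ent γ 1 1 with hDd_def
  set Ee := ent γ' 0 0 with hEe_def
  set F := ent γ' 1 0 with hF_def
  set rK := ((K0 : ℤ) : ℝ) with hrK_def
  have hv0 : 0 < v := ω.2
  have hCpos : (0:ℝ) < C := lt_of_lt_of_le one_pos hC1
  have hC0 : (0:ℝ) ≤ C := hCpos.le
  have hD0 : (0:ℝ) ≤ Dd := le_trans zero_le_one hD1
  have hF0 : (0:ℝ) ≤ F := le_trans zero_le_one hF1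
  have ht0 : (0:ℝ) ≤ u^2 + v^2 := by positivity
  have ht1 : u^2 + v^2 ≤ 1 := by
    have h2 : (‖(ω:ℂ)‖)^2 ≤ 1 := by
      clear * - hk
      nlinarith [norm_nonneg ((ω:ℂ))]
    rw [habs2] at h2
    exact h2
  have h1t : (0:ℝ) ≤ 1 - (u^2+v^2) := by linarith
  have h1t2 : (0:ℝ) ≤ 1 - (u^2+v^2)^2 := by clear * - ht0 ht1; nlinarith
  have hY1pos : (0:ℝ) < (C*u+Dd)^2 + C^2*v^2 := by
    clear * - hCpos hv0
    nlinarith [sq_nonneg (C*u+Dd), mul_pos (mul_pos hCpos hCpos) (mul_pos hv0 hv0)]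
  have hY2pos : (0:ℝ) < (F*u+C)^2 + F^2*v^2 := by
    clear * - hCpos hv0 hF0 hu
    have h1 : (0:ℝ) < F*u+C := by nlinarith [mul_nonneg hF0 hu]
    nlinarith [mul_pos h1 h1, mul_nonneg (mul_nonneg hF0 hF0) (mul_pos hv0 hv0).le]
  have hQ1 : (C*u+Dd)^2 + C^2*v^2 ≤ Q^2 := by
    have h := le_trans (le_max_left (Yg ω γ) (Yg ω γ')) hQ
    rw [hY1] at h
    exact h
  have hQ2 : (F*u+C)^2 + F^2*v^2 ≤ Q^2 := by
    have h := le_trans (le_max_right (Yg ω γ) (Yg ω γ')) hQ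
    rw [hY2] at h
    exact h
  have hQpos : (0:ℝ) < Q^2 := lt_of_lt_of_le hY1pos hQ1
  -- the key algebraic identity
  have hCK : Dd + F = C * rK := by rw [hFdR]; ring
  have key : C*(((Ee*u+A)*(F*u+C) + (Ee*v)*(F*v))*((C*u+Dd)^2 + C^2*v^2)
        - ((F*u+C)^2 + F^2*v^2)*((A*u+B)*(C*u+Dd) + (A*v)*(C*v)))
      - (u^2+v^2)^2*(F*((C*u+Dd)^2 + C^2*v^2) + Dd*((F*u+C)^2 + F^2*v^2))
      = C^2*Dd*(1-(u^2+v^2)^2) + u*C^3*(1+(u^2+v^2)) + u*C*Dd^2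
        + 2*u*C*Dd*F*(1-(u^2+v^2))*(1+2*(u^2+v^2))
        + (u^2+v^2)*Dd^2*F*(1-(u^2+v^2)) + (u^2+v^2)*Dd*F^2*(1-(u^2+v^2)^2)
        + F*C^2*(u^2+v^2)^2*(1-(u^2+v^2)) + u*(u^2+v^2)*C*F^2 + 2*u^2*C^2*(F+Dd) := by
    linear_combination (C^2*Dd + (-1)*v^2*C*Dd^2*rK + v^2*C^2*Dd*rK^2 + (-1)*v^4*C^2*Dd + v^4*C^3*rK + (-1)*u*C*Dd^2 + (2)*u*C^2*Dd*rK + u*C^3 + (-1)*u*v^2*C*Dd^2 + u*v^2*C^3 + u*v^2*C^3*rK^2 + (-1)*u^2*C*Dd^2*rK + u^2*C^2*Dd*rK^2 + (2)*u^2*C^3*rK + (-2)*u^2*v^2*C^2*Dd + (2)*u^2*v^2*C^3*rK + (-1)*u^3*C*Dd^2 + u^3*C^3 + u^3*C^3*rK^2 + (-1)*u^4*C^2*Dd + u^4*C^3*rK) * hdet1R + ((-1)*v^2*Dd*F + (-1)*v^2*C*Dd*rK + (-1)*v^2*B*C*Dd*F + (-1)*v^2*B*C^2*Dd*rK + v^2*A*C*Dd^2*rK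 + (-1)*v^4*C^2 + (-1)*v^4*B*C^3 + (-1)*v^4*A*C^2*F + v^4*A*C^2*Dd + (-2)*u*C*Dd + (-2)*u*B*C^2*Dd + u*A*C*Dd^2 + (-1)*u*v^2*C*F + (-1)*u*v^2*C*Dd + (-1)*u*v^2*C^2*rK + (-1)*u*v^2*B*C^2*F + (-1)*u*v^2*B*C^2*Dd + (-1)*u*v^2*B*C^3*rK + (-1)*u*v^2*A*C*Dd*F + u*v^2*A*C*Dd^2 + u*v^2*A*C^2*Dd*rK + (-1)*u*v^2*A*C^3 + (-1)*u^2*Dd*F + (-1)*u^2*C*Dd*rK + (-2)*u^2*C^2 + (-1)*u^2*B*C*Dd*F + (-1)*u^2*B*C^2*Dd*rK + (-2)*u^2*B*C^3 + u^2*A*C*Dd^2*rK + (-2)*u^2*v^2*C^2 + (-2)*u^2*v^2*B*C^3 + (-2)*u^2*v^2*A*C^2*F + (2)*u^2*v^2*A*C^2*Dd + (-1)*u^3*C*F + (-1)*u^3*C*Dd + (-1)*u^3*C^2*rK + (-1)*u^3*B*C^2*F + (-1)*u^3*B*C^2*Dd + (-1)*u^3*B*C^3*rK + (-1)*u^3*A*C*Dd*F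 + u^3*A*C*Dd^2 + u^3*A*C^2*Dd*rK + (-1)*u^3*A*C^3 + (-1)*u^4*C^2 + (-1)*u^4*B*C^3 + (-1)*u^4*A*C^2*F + u^4*A*C^2*Dd) * hFdR + (v^2*C*Dd^2*F + v^4*C^3*F + u*C^2*Dd^2 + (2)*u*v^2*C^2*Dd*F + u*v^2*C^4 + u^2*C*Dd^2*F + (2)*u^2*C^3*Dd + (2)*u^2*v^2*C^3*F + (2)*u^3*C^2*Dd*F + u^3*C^4 + u^4*C^3*F) * hEeR
  -- nonnegativity of the decomposition
  have hDnn : (0:ℝ) ≤ C^2*Dd*(1-(u^2+v^2)^2) + u*C^3*(1+(u^2+v^2)) + u*C*Dd^2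
        + 2*u*C*Dd*F*(1-(u^2+v^2))*(1+2*(u^2+v^2))
        + (u^2+v^2)*Dd^2*F*(1-(u^2+v^2)) + (u^2+v^2)*Dd*F^2*(1-(u^2+v^2)^2)
        + F*C^2*(u^2+v^2)^2*(1-(u^2+v^2)) + u*(u^2+v^2)*C*F^2 + 2*u^2*C^2*(F+Dd) := by
    clear * - hu hv0 hC0 hD0 hF0 ht0 ht1 h1t h1t2
    have t1 : (0:ℝ) ≤ C^2*Dd*(1-(u^2+v^2)^2) :=
      mul_nonneg (mul_nonneg (sq_nonneg C) hD0) h1t2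
    have t2 : (0:ℝ) ≤ u*C^3*(1+(u^2+v^2)) :=
      mul_nonneg (mul_nonneg hu (pow_nonneg hC0 3)) (by linarith)
    have t3 : (0:ℝ) ≤ u*C*Dd^2 := mul_nonneg (mul_nonneg hu hC0) (sq_nonneg Dd)
    have t4 : (0:ℝ) ≤ 2*u*C*Dd*F*(1-(u^2+v^2))*(1+2*(u^2+v^2)) := by
      have := mul_nonneg (mul_nonneg (mul_nonneg (mul_nonneg (mul_nonneg
        (by norm_num : (0:ℝ) ≤ 2) hu) hC0) hD0) hF0) (mul_nonneg h1t (by linarith : (0:ℝ) ≤ 1+2*(u^2+v^2)))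
      linarith [this]
    have t5 : (0:ℝ) ≤ (u^2+v^2)*Dd^2*F*(1-(u^2+v^2)) :=
      mul_nonneg (mul_nonneg (mul_nonneg ht0 (sq_nonneg Dd)) hF0) h1t
    have t6 : (0:ℝ) ≤ (u^2+v^2)*Dd*F^2*(1-(u^2+v^2)^2) :=
      mul_nonneg (mul_nonneg (mul_nonneg ht0 hD0) (sq_nonneg F)) h1t2
    have t7 : (0:ℝ) ≤ F*C^2*(u^2+v^2)^2*(1-(u^2+v^2)) :=
      mul_nonneg (mul_nonneg (mul_nonneg hF0 (sq_nonneg C)) (sq_nonneg (u^2+v^2))) h1t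
    have t8 : (0:ℝ) ≤ u*(u^2+v^2)*C*F^2 :=
      mul_nonneg (mul_nonneg (mul_nonneg hu ht0) hC0) (sq_nonneg F)
    have t9 : (0:ℝ) ≤ 2*u^2*C^2*(F+Dd) := by
      have := mul_nonneg (mul_nonneg (mul_nonneg (by norm_num : (0:ℝ) ≤ 2) (sq_nonneg u)) (sq_nonneg C)) (by linarith : (0:ℝ) ≤ F+Dd)
      linarith [this]
    linarith
  -- assemble
  rw [ge_iff_le, hPhi1, hPhi2, hKn, habs4]
  rw [div_sub_div _ _ (ne_of_gt hY2pos) (ne_of_gt hY1pos), div_le_div_iff₀ hQpos (mul_pos hY2pos hY1pos)]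
  refine le_of_mul_le_mul_left ?_ hCpos
  have e2 : (0:ℝ) ≤ (C^2*Dd*(1-(u^2+v^2)^2) + u*C^3*(1+(u^2+v^2)) + u*C*Dd^2
        + 2*u*C*Dd*F*(1-(u^2+v^2))*(1+2*(u^2+v^2))
        + (u^2+v^2)*Dd^2*F*(1-(u^2+v^2)) + (u^2+v^2)*Dd*F^2*(1-(u^2+v^2)^2)
        + F*C^2*(u^2+v^2)^2*(1-(u^2+v^2)) + u*(u^2+v^2)*C*F^2 + 2*u^2*C^2*(F+Dd))*Q^2 :=
    mul_nonneg hDnn (sq_nonneg Q)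
  have h3nn : (0:ℝ) ≤ (u^2+v^2)^2*F*((C*u+Dd)^2 + C^2*v^2) :=
    mul_nonneg (mul_nonneg (sq_nonneg (u^2+v^2)) hF0) hY1pos.le
  have h4nn : (0:ℝ) ≤ (u^2+v^2)^2*Dd*((F*u+C)^2 + F^2*v^2) :=
    mul_nonneg (mul_nonneg (sq_nonneg (u^2+v^2)) hD0) hY2pos.le
  have e3 := mul_le_mul_of_nonneg_left hQ2 h3nn
  have e4 := mul_le_mul_of_nonneg_left hQ1 h4nn
  calc C * (rK * ((u:ℝ)^2+v^2)^2 * (((F*u+C)^2 + F^2*v^2) * ((C*u+Dd)^2 + C^2*v^2)))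
      = ((u^2+v^2)^2*F*((C*u+Dd)^2 + C^2*v^2)) * ((F*u+C)^2 + F^2*v^2)
        + ((u^2+v^2)^2*Dd*((F*u+C)^2 + F^2*v^2)) * ((C*u+Dd)^2 + C^2*v^2) := by
        linear_combination (-((u^2+v^2)^2*(((C*u+Dd)^2 + C^2*v^2)*((F*u+C)^2 + F^2*v^2))))*hCK
    _ ≤ ((u^2+v^2)^2*F*((C*u+Dd)^2 + C^2*v^2)) * Q^2
        + ((u^2+v^2)^2*Dd*((F*u+C)^2 + F^2*v^2)) * Q^2 := add_le_add e3 e4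
    _ ≤ (C^2*Dd*(1-(u^2+v^2)^2) + u*C^3*(1+(u^2+v^2)) + u*C*Dd^2
        + 2*u*C*Dd*F*(1-(u^2+v^2))*(1+2*(u^2+v^2))
        + (u^2+v^2)*Dd^2*F*(1-(u^2+v^2)) + (u^2+v^2)*Dd*F^2*(1-(u^2+v^2)^2)
        + F*C^2*(u^2+v^2)^2*(1-(u^2+v^2)) + u*(u^2+v^2)*C*F^2 + 2*u^2*C^2*(F+Dd))*Q^2
        + (((u^2+v^2)^2*F*((C*u+Dd)^2 + C^2*v^2)) * Q^2
        + ((u^2+v^2)^2*Dd*((F*u+C)^2 + F^2*v^2)) * Q^2) := le_add_of_nonneg_left e2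
    _ = C * ((((Ee*u+A)*(F*u+C) + (Ee*v)*(F*v))*((C*u+Dd)^2 + C^2*v^2)
        - ((F*u+C)^2 + F^2*v^2)*((A*u+B)*(C*u+Dd) + (A*v)*(C*v))) * Q^2) := by
        linear_combination -Q^2*key
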